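/- For every ℓ ∈ ℕ, all matrices A₁, A₂ ∈ M_ℓ(ℂ), and all z, ζ ∈ ℂ, setting s = z + ζ and p = zζ, one has det(I_{2ℓ} − [[A₁, A₂], [A₂, A₁]]·diag(zI_ℓ, ζI_ℓ)) = det(I_ℓ − s·A₁ + p·(A₁ + A₂)(A₁ − A₂)). -/
import Mathlib

open Matrix Polynomial

variable {n : Type*} [Fintype n] [DecidableEq n]

theorem det_fromBlocks_of_comm (A B C D : Matrix n n ℂ) (h : C * D = D * C) :
    (Matrix.fromBlocks A B C D).det = (A * D - B * C).det := by
  classical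
  -- polynomials
  set φ : ℂ →+* ℂ[X] := Polynomial.C with hφ
  set D' : Matrix n n ℂ[X] := D.map φ + (X : ℂ[X]) • 1 with hD'
  set P : ℂ[X] :=
    (Matrix.fromBlocks (A.map φ) (B.map φ) (C.map φ) D').det -
      ((A.map φ) * D' - (B.map φ) * (C.map φ)).det with hP
  have hmap : ∀ t : ℂ, ∀ M : Matrix n n ℂ, (M.map φ).map (eval t) = M := by
    intro t M
    ext i j
    simp [hφ]
  have hDt : ∀ t : ℂ, D'.map (eval t) = D + t • 1 := by
    intro t
    ext i j
    simp [hD', hφ, Matrix.one_apply, Matrix.smul_apply]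
    split <;> simp
  have keval : ∀ t : ℂ, P.eval t =
      (Matrix.fromBlocks A B C (D + t • 1)).det -
        (A * (D + t • 1) - B * C).det := by
    intro t
    have e1 : (Polynomial.evalRingHom t) (Matrix.fromBlocks (A.map φ) (B.map φ) (C.map φ) D').det
        = (Matrix.fromBlocks A B C (D + t • 1)).det := by
      rw [RingHom.map_det]
      congr 1
      rw [RingHom.mapMatrix_apply]
      show (Matrix.fromBlocks (A.map φ) (B.map φ) (C.map φ) D').map (eval t) = _
      rw [Matrix.fromBlocks_map, hmap, hmap, hmap, hDt]
    have e2 : (Polynomial.evalRingHom t) ((A.map φ) * D' - (B.map φ) * (C.map φ)).det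
        = (A * (D + t • 1) - B * C).det := by
      rw [RingHom.map_det]
      congr 1
      rw [RingHom.mapMatrix_apply]
      show ((A.map φ) * D' - (B.map φ) * (C.map φ)).map (eval t) = _
      have hmul : ∀ (M N : Matrix n n ℂ[X]), (M * N).map (eval t)
          = M.map (eval t) * N.map (eval t) := fun M N =>
        Matrix.map_mul (f := Polynomial.evalRingHom t)
      rw [Matrix.map_sub _ (fun a b => by simp), hmul, hmul, hmap, hmap, hmap, hDt]
    simp only [hP, Polynomial.eval_sub]
    exact congrArg₂ (· - ·) e1 e2
  -- generic evaluation is zero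
  have hzero : ∀ t : ℂ, IsUnit (D + t • 1).det → P.eval t = 0 := by
    intro t ht
    rw [keval]
    have := (D + t • 1).invertibleOfIsUnitDet ht
    rw [Matrix.det_fromBlocks₂₂]
    have hcomm : C * (D + t • 1) = (D + t • 1) * C := by
      simp [Matrix.mul_add, Matrix.add_mul, h, Matrix.mul_smul, Matrix.smul_mul]
    have hC : ⅟(D + t • 1) * C * (D + t • 1) = C := by
      rw [Matrix.mul_assoc, hcomm, ← Matrix.mul_assoc, invOf_mul_self, Matrix.one_mul]
    rw [mul_comm, ← Matrix.det_mul, Matrix.sub_mul, Matrix.mul_assoc (B * ⅟(D + t • 1))]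
    rw [show B * ⅟(D + t • 1) * (C * (D + t • 1)) = B * (⅟(D + t • 1) * C * (D + t • 1)) by
      simp [Matrix.mul_assoc]]
    rw [hC, sub_self]
  -- the bad set is finite
  have hq : (D'.det : ℂ[X]) ≠ 0 := by
    have : D'.det = (-D).charpoly := by
      unfold Matrix.charpoly
      congr 1
      ext i j
      by_cases hij : i = j
      · subst hij
        simp [hD', hφ, Matrix.one_apply, charmatrix_apply_eq, Matrix.add_apply,
          Matrix.smul_apply, add_comm]
      · simp [hD', hφ, Matrix.one_apply, hij, charmatrix_apply_ne _ _ _ hij,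
          Matrix.add_apply, Matrix.smul_apply]
    rw [this]
    exact ((-D).charpoly_monic).ne_zero
  have hPz : P = 0 := by
    apply Polynomial.eq_zero_of_infinite_isRoot
    have hfin : Set.Finite {t : ℂ | D'.det.eval t = 0} := Polynomial.finite_setOf_isRoot hq
    apply Set.Infinite.mono (s := {t : ℂ | D'.det.eval t ≠ 0})
    · intro t (htn : D'.det.eval t ≠ 0)
      have : IsUnit (D + t • 1).det := by
        have : (Polynomial.evalRingHom t) D'.det = (D + t • 1).det := by
          rw [RingHom.map_det]
          congr 1
          rw [RingHom.mapMatrix_apply, show ((Polynomial.evalRingHom t) : ℂ[X] → ℂ) = eval t from rfl, hDt]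
        rw [isUnit_iff_ne_zero, ← this]
        exact htn
      exact hzero t this
    · have : {t : ℂ | D'.det.eval t ≠ 0} = {t : ℂ | D'.det.eval t = 0}ᶜ := rfl
      rw [this]
      exact Set.Finite.infinite_compl hfin
  have := keval 0
  rw [hPz] at this
  simp only [Polynomial.eval_zero, zero_smul, add_zero] at this
  exact sub_eq_zero.mp this.symm

noncomputable section

open Matrix

theorem det_symBlock_eq_det_symmetrized (ℓ : ℕ) (A₁ A₂ : Matrix (Fin ℓ) (Fin ℓ) ℂ)
    (z ζ : ℂ) :
    (1 - Matrix.fromBlocks A₁ A₂ A₂ A₁ * Matrix.fromBlocks (z • 1) 0 0 (ζ • 1)).det =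
      ((1 : Matrix (Fin ℓ) (Fin ℓ) ℂ) - (z + ζ) • A₁ +
          (z * ζ) • ((A₁ + A₂) * (A₁ - A₂))).det := by
  set S : Matrix (Fin ℓ) (Fin ℓ) ℂ := A₁ + A₂ with hS
  set T : Matrix (Fin ℓ) (Fin ℓ) ℂ := A₁ - A₂ with hT
  set a : ℂ := (z + ζ) / 2 with ha
  set b : ℂ := (z - ζ) / 2 with hb
  set P2 : Matrix (Fin ℓ ⊕ Fin ℓ) (Fin ℓ ⊕ Fin ℓ) ℂ := Matrix.fromBlocks 1 1 1 (-1) with hP2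
  set W : Matrix (Fin ℓ ⊕ Fin ℓ) (Fin ℓ ⊕ Fin ℓ) ℂ :=
    Matrix.fromBlocks ((z/2) • S) ((ζ/2) • S) ((z/2) • T) (-((ζ/2) • T)) with hW
  have key1 : Matrix.fromBlocks A₁ A₂ A₂ A₁ * Matrix.fromBlocks (z • 1) 0 0 (ζ • 1)
      = P2 * W := by
    rw [hP2, hW, Matrix.fromBlocks_multiply, Matrix.fromBlocks_multiply,
      Matrix.fromBlocks_inj]
    refine ⟨?_, ?_, ?_, ?_⟩ <;>
      simp only [Matrix.mul_smul, Matrix.mul_one, Matrix.mul_zero, Matrix.mul_neg,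
        Matrix.one_mul, Matrix.neg_mul, hS, hT] <;> module
  have key2 : W * P2 = Matrix.fromBlocks (a • S) (b • S) (b • T) (a • T) := by
    rw [hP2, hW, Matrix.fromBlocks_multiply, Matrix.fromBlocks_inj]
    refine ⟨?_, ?_, ?_, ?_⟩ <;>
      simp only [Matrix.mul_smul, Matrix.mul_one, Matrix.mul_zero, Matrix.mul_neg,
        Matrix.one_mul, Matrix.neg_mul, Matrix.smul_mul, ha, hb] <;> module
  rw [key1, Matrix.det_one_sub_mul_comm, key2]
  have hsplit : (1 : Matrix (Fin ℓ ⊕ Fin ℓ) (Fin ℓ ⊕ Fin ℓ) ℂ)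
      - Matrix.fromBlocks (a • S) (b • S) (b • T) (a • T)
      = Matrix.fromBlocks (1 - a • S) (-(b • S)) (-(b • T)) (1 - a • T) := by
    rw [← Matrix.fromBlocks_one, sub_eq_add_neg, Matrix.fromBlocks_neg,
      Matrix.fromBlocks_add, Matrix.fromBlocks_inj]
    refine ⟨?_, ?_, ?_, ?_⟩ <;> simp [sub_eq_add_neg]
  rw [hsplit]
  have hcomm : (-(b • T)) * (1 - a • T) = (1 - a • T) * (-(b • T)) := by
    simp only [Matrix.neg_mul, Matrix.mul_neg, Matrix.mul_sub, Matrix.sub_mul,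
      Matrix.mul_one, Matrix.one_mul, Matrix.smul_mul, Matrix.mul_smul, smul_smul,
      mul_comm a b]
    module
  rw [det_fromBlocks_of_comm _ _ _ _ hcomm]
  congr 1
  simp only [Matrix.mul_sub, Matrix.sub_mul, Matrix.mul_one, Matrix.one_mul,
    Matrix.neg_mul, Matrix.mul_neg, neg_neg, Matrix.smul_mul, Matrix.mul_smul,
    smul_smul, ha, hb, hS, hT]
  module
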